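/- arXiv:1002.3644 — 5 statements merged into one kernel-verified Lean document; each statement's English description precedes it below -/
import Mathlib

section
/- Suppose J·s ⊆ J (i.e. a·s ∈ J for every a ∈ J), the endomorphism ring Module.End A (A⧸J) of the quotient left A-module is finite-dimensional as a K-vector space, and the evaluation map K[X] → A, p ↦ p(s), is injective. Then J ∩ K[s] ≠ {0}: there exists a polynomial p ∈ K[X] such that p(s) ∈ J and p(s) ≠ 0. -/
/-!
Right multiplication by `s` descends to an `A`-linear endomorphism `T` of `A ⧸ J`, and
`p(T)[1] = [p(s)]` for every polynomial `p`. Since `End_A (A ⧸ J)` is finite-dimensional, `T` has a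
minimal polynomial `p ≠ 0`; then `[p(s)] = p(T)[1] = 0`, i.e. `p(s) ∈ J`, and `p(s) ≠ 0` by
injectivity of evaluation at `s`.
-/

open Polynomial

namespace Submodule

variable {A : Type*} [Ring A] (J : Submodule A A) {s : A}

def mulRightQuot (hJs : ∀ a ∈ J, a * s ∈ J) : Module.End A (A ⧸ J) :=
  J.mapQ J (LinearMap.toSpanSingleton A A s) hJs

variable (hJs : ∀ a ∈ J, a * s ∈ J)

@[simp]
theorem mulRightQuot_mk (a : A) :
    J.mulRightQuot hJs (Quotient.mk a) = Quotient.mk (a * s) :=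
  rfl

theorem aeval_mulRightQuot_mk {R : Type*} [CommRing R] [Algebra R A] (p : R[X]) (a : A) :
    aeval (J.mulRightQuot hJs) p (Quotient.mk a) = Quotient.mk (a * aeval s p) := by
  induction p using Polynomial.induction_on generalizing a with
  | C r =>
    rw [aeval_C, aeval_C, Algebra.algebraMap_eq_smul_one, Algebra.algebraMap_eq_smul_one,
      mul_smul_comm, mul_one]
    rfl
  | add p q hp hq => simp only [map_add, LinearMap.add_apply, hp, hq, mul_add, Quotient.mk_add]
  | monomial n r ih =>
    rw [pow_succ, ← mul_assoc, map_mul, aeval_X, Module.End.mul_apply, mulRightQuot_mk, ih,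
      mul_comm _ X, map_mul (aeval s) X, aeval_X, mul_assoc]

theorem aeval_minpoly_mulRightQuot_mem {R : Type*} [CommRing R] [Algebra R A] :
    aeval s (minpoly R (J.mulRightQuot hJs)) ∈ J := by
  rw [← Quotient.mk_eq_zero, ← one_mul (aeval s _), ← J.aeval_mulRightQuot_mk hJs, minpoly.aeval,
    LinearMap.zero_apply]

end Submodule

theorem stmt0_general (K : Type*) [Field K]
    (A : Type*) [Ring A] [Algebra K A]
    (J : Submodule A A) (s : A)
    (hJs : ∀ a ∈ J, a * s ∈ J)
    (hfin : FiniteDimensional K (Module.End A (A ⧸ J)))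
    (hinj : Function.Injective (Polynomial.aeval s : Polynomial K → A)) :
    ∃ p : Polynomial K, Polynomial.aeval s p ∈ J ∧ Polynomial.aeval s p ≠ 0 := by
  have hT : IsIntegral K (J.mulRightQuot hJs) := IsIntegral.of_finite K _
  refine ⟨minpoly K (J.mulRightQuot hJs), J.aeval_minpoly_mulRightQuot_mem hJs, fun h => ?_⟩
  exact minpoly.ne_zero hT (hinj (h.trans (map_zero _).symm))

/-- If `J·s ⊆ J`, the endomorphism ring of `A ⧸ J` is finite-dimensional
over `K`, and `p ↦ p(s)` is injective, then `J ∩ K[s] ≠ {0}`. -/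
theorem stmt0 (K : Type*) [Field K] [CharZero K]
    (A : Type*) [Ring A] [Algebra K A]
    (J : Submodule A A) (s : A)
    (hJs : ∀ a ∈ J, a * s ∈ J)
    (hfin : FiniteDimensional K (Module.End A (A ⧸ J)))
    (hinj : Function.Injective (Polynomial.aeval s : Polynomial K → A)) :
    ∃ p : Polynomial K, Polynomial.aeval s p ∈ J ∧ Polynomial.aeval s p ≠ 0 :=
  stmt0_general K A J s hJs hfin hinj
end

section
/- Suppose J·s ⊆ J (i.e. a·s ∈ J for every a ∈ J) and d := dim_K Module.End A (A⧸J) is finite. Then there exists a monic polynomial p ∈ K[X] with deg p ≤ d such that p(s) ∈ J. -/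
/-!
Right multiplication by `s` descends to an `A`-linear endomorphism `φ` of `A ⧸ J`, and
`p(φ)` sends the class of `1` to the class of `p(s)`. Since `Module.End A (A ⧸ J)` is a
finite-dimensional `K`-algebra, the minimal polynomial of `φ` is monic of degree at most its
dimension, and it kills `φ`, hence `p(s) ∈ J`.
-/

namespace Submodule

variable {A : Type*} [Ring A] (J : Submodule A A) {s : A}

def quotientMulRight (hJs : ∀ a ∈ J, a * s ∈ J) : Module.End A (A ⧸ J) :=
  J.mapQ J (LinearMap.toSpanSingleton A A s) hJs

variable (hJs : ∀ a ∈ J, a * s ∈ J)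

@[simp]
theorem quotientMulRight_mk (a : A) :
    J.quotientMulRight hJs (Quotient.mk a) = Quotient.mk (a * s) :=
  rfl

theorem quotientMulRight_pow_mk (n : ℕ) (a : A) :
    (J.quotientMulRight hJs ^ n) (Quotient.mk a) = Quotient.mk (a * s ^ n) := by
  induction n with
  | zero => simp
  | succ n ih => rw [pow_succ', Module.End.mul_apply, ih, quotientMulRight_mk, pow_succ, mul_assoc]

theorem aeval_quotientMulRight_mk {R : Type*} [CommSemiring R] [Algebra R A] (p : Polynomial R)
    (a : A) :
    Polynomial.aeval (J.quotientMulRight hJs) p (Quotient.mk a) =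
      Quotient.mk (a * Polynomial.aeval s p) := by
  induction p using Polynomial.induction_on' with
  | add p q hp hq => simp only [map_add, LinearMap.add_apply, hp, hq, mul_add, Quotient.mk_add]
  | monomial n c =>
    simp only [Polynomial.aeval_monomial, Algebra.algebraMap_eq_smul_one, smul_mul_assoc,
      one_mul, LinearMap.smul_apply, quotientMulRight_pow_mk, mul_smul_comm, Quotient.mk_smul]

end Submodule

theorem stmt1_general (K : Type*) [Field K]
    (A : Type*) [Ring A] [Algebra K A]
    (J : Submodule A A) (s : A)
    (hJs : ∀ a ∈ J, a * s ∈ J)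
    (hfin : FiniteDimensional K (Module.End A (A ⧸ J))) :
    ∃ p : Polynomial K, p.Monic ∧
      p.natDegree ≤ Module.finrank K (Module.End A (A ⧸ J)) ∧
      Polynomial.aeval s p ∈ J := by
  set φ := J.quotientMulRight hJs
  refine ⟨minpoly K φ, minpoly.monic (Algebra.IsIntegral.isIntegral φ),
    minpoly.natDegree_le φ, ?_⟩
  have h := J.aeval_quotientMulRight_mk hJs (minpoly K φ) 1
  rw [minpoly.aeval, one_mul] at h
  exact (Submodule.Quotient.mk_eq_zero J).1 h.symm

/-- If `J·s ⊆ J` and `d = dim_K End_A(A⧸J)` is finite, then there is a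
monic polynomial `p ∈ K[X]` of degree at most `d` with `p(s) ∈ J`. -/
theorem stmt1 (K : Type*) [Field K] [CharZero K]
    (A : Type*) [Ring A] [Algebra K A]
    (J : Submodule A A) (s : A)
    (hJs : ∀ a ∈ J, a * s ∈ J)
    (hfin : FiniteDimensional K (Module.End A (A ⧸ J))) :
    ∃ p : Polynomial K, p.Monic ∧
      p.natDegree ≤ Module.finrank K (Module.End A (A ⧸ J)) ∧
      Polynomial.aeval s p ∈ J :=
  stmt1_general K A J s hJs hfin
end

section
/- Suppose J·s ⊆ J (i.e. a·s ∈ J for every a ∈ J) and Module.End A (A⧸J) is finite-dimensional over K. Then there exists a monic polynomial b ∈ K[X] such that for every polynomial p ∈ K[X], one has p(s) ∈ J if and only if b divides p. (In other words, {p ∈ K[X] : p(s) ∈ J} is the nonzero principal ideal of K[X] generated by the monic polynomial b; this is the polynomial returned by the PrincipalIntersect algorithm.) -/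
/-! Right multiplication by `s` descends to an endomorphism `f` of `A ⧸ J`, and `p(f)` sends the
class of `1` to the class of `p(s)`. As `End_A(A ⧸ J)` is finite-dimensional, `f` has a nonzero
minimal polynomial, which therefore lies in the ideal `{p | p(s) ∈ J}` of the principal ideal
domain `K[X]`; the normalized generator of that ideal is `b`. -/

open Polynomial

theorem Ideal.exists_monic_forall_mem_iff_dvd {K : Type*} [Field K] {I : Ideal K[X]}
    (hI : I ≠ ⊥) : ∃ b : K[X], b.Monic ∧ ∀ p, p ∈ I ↔ b ∣ p := by
  classical
  have hgen : Submodule.IsPrincipal.generator I ≠ 0 :=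
    mt (Submodule.IsPrincipal.eq_bot_iff_generator_eq_zero I).mpr hI
  exact ⟨normalize _, monic_normalize hgen, fun p ↦ by
    rw [normalize_dvd_iff, Submodule.IsPrincipal.mem_iff_generator_dvd]⟩

namespace Submodule

variable {A : Type*} [Ring A] (J : Submodule A A) (s : A) (hJs : ∀ a ∈ J, a * s ∈ J)

def mulRightQ : Module.End A (A ⧸ J) :=
  J.mapQ J (LinearMap.toSpanSingleton A A s) hJs

@[simp]
theorem mulRightQ_mk (x : A) : J.mulRightQ s hJs (Quotient.mk x) = Quotient.mk (x * s) :=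
  rfl

theorem aeval_mulRightQ_mk {K : Type*} [Field K] [Algebra K A] (p : K[X]) (x : A) :
    aeval (J.mulRightQ s hJs) p (Quotient.mk x) = Quotient.mk (x * aeval s p) := by
  induction p using Polynomial.induction_on generalizing x with
  | C c => simp [Algebra.algebraMap_eq_smul_one, ← Quotient.mk_smul]
  | add p q hp hq => simp [hp, hq, mul_add]
  | monomial n c ih =>
    -- `s` commutes with every `q(s)`, so on the `A` side the new factor `X` may be moved to the left.
    rw [pow_succ, ← mul_assoc, map_mul, aeval_X, Module.End.mul_apply, mulRightQ_mk, ih,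
      mul_assoc, ← (commute_X _).eq, map_mul (aeval s) X, aeval_X]

end Submodule

theorem stmt3_general (K : Type*) [Field K]
    (A : Type*) [Ring A] [Algebra K A]
    (J : Submodule A A) (s : A)
    (hJs : ∀ a ∈ J, a * s ∈ J)
    (hfin : FiniteDimensional K (Module.End A (A ⧸ J))) :
    ∃ b : Polynomial K, b.Monic ∧
      ∀ p : Polynomial K, Polynomial.aeval s p ∈ J ↔ b ∣ p := by
  set f := J.mulRightQ s hJs
  have hminpoly : minpoly K f ∈ Ideal.comap (aeval s) J := by
    rw [Ideal.mem_comap, ← Submodule.Quotient.mk_eq_zero, ← one_mul (aeval s _),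
      ← J.aeval_mulRightQ_mk s hJs, minpoly.aeval, LinearMap.zero_apply]
  have hne : Ideal.comap (aeval s) J ≠ ⊥ := fun h ↦
    minpoly.ne_zero (IsIntegral.of_finite K f) (Ideal.mem_bot.mp (h ▸ hminpoly))
  exact Ideal.exists_monic_forall_mem_iff_dvd hne

/-- If `J·s ⊆ J` and `End_A(A⧸J)` is finite-dimensional over `K`, then
`{p ∈ K[X] | p(s) ∈ J}` is the nonzero principal ideal generated by a monic `b`. -/
theorem stmt3 (K : Type*) [Field K] [CharZero K]
    (A : Type*) [Ring A] [Algebra K A]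
    (J : Submodule A A) (s : A)
    (hJs : ∀ a ∈ J, a * s ∈ J)
    (hfin : FiniteDimensional K (Module.End A (A ⧸ J))) :
    ∃ b : Polynomial K, b.Monic ∧
      ∀ p : Polynomial K, Polynomial.aeval s p ∈ J ↔ b ∣ p :=
  stmt3_general K A J s hJs hfin
end

section
/- Let w : Fin n → K, m ∈ K, and let P = Σ_{(α,β)∈F} c_{α,β} · x^α∘∂^β be a finite K-linear combination of the operators x^α∂^β such that Σᵢ wᵢ·((βᵢ : K) − (αᵢ : K)) = m for every pair (α,β) with c_{α,β} ≠ 0 (P is (−w,w)-homogeneous of degree m). Set E := Σᵢ wᵢ • (xᵢ∘∂ᵢ). Then P∘E = E∘P + m•P as K-linear endomorphisms of K[x₁,…,xₙ]; in particular right composition with the Euler operator E maps P to (E + m)∘P. -/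
/-!
Call `a` homogeneous of degree `r` for `e` when `a * e = e * a + r • a`, i.e. `⁅a, e⁆ = r • a`.
Since `⁅·, e⁆` is a derivation of the associative algebra, degrees add under products, and a
linear combination of elements of degree `r` has degree `r`. For the Euler derivation
`E = Σ wᵢ xᵢ ∂ᵢ` the generators are homogeneous: `⁅∂ⱼ, E⁆ = wⱼ ∂ⱼ` is an identity between
derivations of `K[x]`, so it suffices to check it on the variables, and `⁅xⱼ, E⁆ = -wⱼ xⱼ` is the
Leibniz rule for `E`. Hence `x^α ∂^β` has degree `Σ wᵢ (βᵢ - αᵢ)`, and `P` has degree `m`.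
-/

open MvPolynomial

/-- Multiplication by the monomial `x^α = ∏ᵢ xᵢ^{αᵢ}` as a K-linear endomorphism
of `K[x₁,…,xₙ]`. -/
noncomputable def xPowMul (K : Type*) [Field K] (n : ℕ) (α : Fin n → ℕ) :
    Module.End K (MvPolynomial (Fin n) K) :=
  LinearMap.mulLeft K (∏ i, X i ^ α i)

/-- The composition `∂^β = ∂₁^{β₁} ∘ ⋯ ∘ ∂ₙ^{βₙ}` of partial derivatives as a
K-linear endomorphism of `K[x₁,…,xₙ]` (the `∂ᵢ` commute pairwise). -/
noncomputable def pderivPow (K : Type*) [Field K] (n : ℕ) (β : Fin n → ℕ) :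
    Module.End K (MvPolynomial (Fin n) K) :=
  (List.ofFn fun i : Fin n =>
    ((pderiv i).toLinearMap : Module.End K (MvPolynomial (Fin n) K)) ^ β i).prod

section AdHomogeneous

variable {R A : Type*} [CommSemiring R] [Semiring A] [Algebra R A]

def IsAdHomogeneous (e : A) (r : R) (a : A) : Prop :=
  a * e = e * a + r • a

variable {e : A}

theorem IsAdHomogeneous.mul {a b : A} {r s : R} (ha : IsAdHomogeneous e r a)
    (hb : IsAdHomogeneous e s b) : IsAdHomogeneous e (r + s) (a * b) := by
  unfold IsAdHomogeneous at *
  rw [mul_assoc, hb, mul_add, ← mul_assoc, ha, mul_smul_comm, add_mul, add_smul,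
    smul_mul_assoc, mul_assoc, add_assoc, add_comm (r • (a * b))]

theorem IsAdHomogeneous.one : IsAdHomogeneous e (0 : R) (1 : A) := by
  simp [IsAdHomogeneous]

theorem IsAdHomogeneous.pow {a : A} {r : R} (ha : IsAdHomogeneous e r a) (k : ℕ) :
    IsAdHomogeneous e (k • r) (a ^ k) := by
  induction k with
  | zero => simpa using IsAdHomogeneous.one
  | succ k ih =>
    rw [pow_succ, succ_nsmul]
    exact ih.mul ha

theorem isAdHomogeneous_list_prod_ofFn {n : ℕ} {a : Fin n → A} {r : Fin n → R}
    (h : ∀ i, IsAdHomogeneous e (r i) (a i)) :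
    IsAdHomogeneous e (∑ i, r i) (List.ofFn a).prod := by
  induction n with
  | zero => simpa using IsAdHomogeneous.one
  | succ n ih =>
    rw [List.ofFn_succ, List.prod_cons, Fin.sum_univ_succ]
    exact (h 0).mul (ih fun i => h i.succ)

theorem isAdHomogeneous_sum_smul {ι : Type*} {s : Finset ι} {c : ι → R} {a : ι → A} {r : R}
    (h : ∀ i ∈ s, c i ≠ 0 → IsAdHomogeneous e r (a i)) :
    IsAdHomogeneous e r (∑ i ∈ s, c i • a i) := by
  unfold IsAdHomogeneous at *
  rw [Finset.sum_mul, Finset.mul_sum, Finset.smul_sum, ← Finset.sum_add_distrib]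
  refine Finset.sum_congr rfl fun i hi => ?_
  rcases eq_or_ne (c i) 0 with hc | hc
  · simp [hc]
  · rw [smul_mul_assoc, h i hi hc, mul_smul_comm, smul_add, smul_comm r]

end AdHomogeneous

namespace MvPolynomial

variable {R σ : Type*} [CommRing R] [Fintype σ]

noncomputable def euler (w : σ → R) : Derivation R (MvPolynomial σ R) (MvPolynomial σ R) :=
  ∑ i, w i • (X i : MvPolynomial σ R) • pderiv i

theorem euler_apply (w : σ → R) (f : MvPolynomial σ R) :
    euler w f = ∑ i, w i • (X i * pderiv i f) := by
  rw [euler, ← Derivation.coeFnAddMonoidHom_apply, map_sum, Finset.sum_apply]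
  rfl

theorem euler_X (w : σ → R) (j : σ) : euler w (X j) = w j • X j := by
  classical
  simp [euler_apply, Pi.single_apply]

theorem coe_euler (w : σ → R) :
    (euler w : Module.End R (MvPolynomial σ R)) =
      ∑ i, w i • (LinearMap.mulLeft R (X i) * (pderiv i).toLinearMap) := by
  refine LinearMap.ext fun f => ?_
  simp [euler_apply]

theorem lie_pderiv_euler (w : σ → R) (j : σ) :
    ⁅(pderiv j : Derivation R (MvPolynomial σ R) _), euler w⁆ = w j • pderiv j := by
  classical
  refine derivation_ext fun k => ?_
  rw [Derivation.commutator_apply, euler_X]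
  rcases eq_or_ne k j with rfl | hkj
  · simp
  · simp [pderiv_X_of_ne hkj]

theorem isAdHomogeneous_pderiv_euler (w : σ → R) (j : σ) :
    IsAdHomogeneous (euler w : Module.End R (MvPolynomial σ R)) (w j) (pderiv j).toLinearMap := by
  have hlie := congrArg Derivation.toLinearMap (lie_pderiv_euler w j)
  rwa [Derivation.commutator_coe_linear_map, Ring.lie_def, sub_eq_iff_eq_add'] at hlie

theorem isAdHomogeneous_mulLeft_X_euler (w : σ → R) (j : σ) :
    IsAdHomogeneous (euler w : Module.End R (MvPolynomial σ R)) (-w j)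
      (LinearMap.mulLeft R (X j)) := by
  refine LinearMap.ext fun f => ?_
  simp [Derivation.leibniz, euler_X, mul_comm f]

end MvPolynomial

section WeylMonomials

variable {K : Type*} [Field K] {n : ℕ}

theorem xPowMul_eq_list_prod_ofFn (α : Fin n → ℕ) :
    xPowMul K n α = (List.ofFn fun i => LinearMap.mulLeft K (X i) ^ α i).prod := by
  rw [xPowMul, ← Fin.prod_ofFn]
  exact (map_list_prod (Algebra.lmul K (MvPolynomial (Fin n) K)) _).trans
    (by simp [Function.comp_def]; rfl)

theorem isAdHomogeneous_xPowMul_euler (w : Fin n → K) (α : Fin n → ℕ) :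
    IsAdHomogeneous (euler w : Module.End K (MvPolynomial (Fin n) K)) (∑ i, α i • -w i)
      (xPowMul K n α) := by
  rw [xPowMul_eq_list_prod_ofFn]
  exact isAdHomogeneous_list_prod_ofFn fun i => (isAdHomogeneous_mulLeft_X_euler w i).pow (α i)

theorem isAdHomogeneous_pderivPow_euler (w : Fin n → K) (β : Fin n → ℕ) :
    IsAdHomogeneous (euler w : Module.End K (MvPolynomial (Fin n) K)) (∑ i, β i • w i)
      (pderivPow K n β) :=
  isAdHomogeneous_list_prod_ofFn fun i => (isAdHomogeneous_pderiv_euler w i).pow (β i)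

theorem isAdHomogeneous_xPowMul_mul_pderivPow_euler (w : Fin n → K) (α β : Fin n → ℕ) :
    IsAdHomogeneous (euler w : Module.End K (MvPolynomial (Fin n) K))
      (∑ i, w i * ((β i : K) - (α i : K))) (xPowMul K n α * pderivPow K n β) := by
  convert (isAdHomogeneous_xPowMul_euler w α).mul (isAdHomogeneous_pderivPow_euler w β) using 1
  simp only [nsmul_eq_mul, ← Finset.sum_add_distrib]
  exact Finset.sum_congr rfl fun i _ => by ring

end WeylMonomials

theorem stmt8_general (K : Type*) [Field K] (n : ℕ)
    (w : Fin n → K) (m : K)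
    (F : Finset ((Fin n → ℕ) × (Fin n → ℕ)))
    (c : (Fin n → ℕ) × (Fin n → ℕ) → K)
    (hdeg : ∀ q ∈ F, c q ≠ 0 → ∑ i, w i * ((q.2 i : K) - (q.1 i : K)) = m)
    (P : Module.End K (MvPolynomial (Fin n) K))
    (hP : P = ∑ q ∈ F, c q • (xPowMul K n q.1 * pderivPow K n q.2))
    (E : Module.End K (MvPolynomial (Fin n) K))
    (hE : E = ∑ i, w i • (LinearMap.mulLeft K (X i) * (pderiv i).toLinearMap)) :
    P * E = E * P + m • P := by
  rw [← coe_euler] at hE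
  subst hP hE
  exact isAdHomogeneous_sum_smul fun q hq hc =>
    hdeg q hq hc ▸ isAdHomogeneous_xPowMul_mul_pderivPow_euler w q.1 q.2

/-- if `P = Σ_{(α,β)∈F} c_{α,β} x^α∂^β` is `(−w,w)`-homogeneous of degree
`m`, i.e. `Σᵢ wᵢ(βᵢ − αᵢ) = m` whenever `c_{α,β} ≠ 0`, and `E = Σᵢ wᵢ xᵢ∂ᵢ` is the
Euler operator, then `P∘E = E∘P + m•P`. -/
theorem stmt8 (K : Type*) [Field K] [CharZero K] (n : ℕ)
    (w : Fin n → K) (m : K)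
    (F : Finset ((Fin n → ℕ) × (Fin n → ℕ)))
    (c : (Fin n → ℕ) × (Fin n → ℕ) → K)
    (hdeg : ∀ q ∈ F, c q ≠ 0 → ∑ i, w i * ((q.2 i : K) - (q.1 i : K)) = m)
    (P : Module.End K (MvPolynomial (Fin n) K))
    (hP : P = ∑ q ∈ F, c q • (xPowMul K n q.1 * pderivPow K n q.2))
    (E : Module.End K (MvPolynomial (Fin n) K))
    (hE : E = ∑ i, w i • (LinearMap.mulLeft K (X i) * (pderiv i).toLinearMap)) :
    P * E = E * P + m • P :=
  stmt8_general K n w m F c hdeg P hP E hE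
end

section
/- For all indices k ∈ {1,…,p} and i ∈ {1,…,n}, the operators t_k − f_k and gᵢ commute: [t_k − f_k, gᵢ] = 0 as K-linear endomorphisms of K[x₁,…,xₙ,t₁,…,t_p]. -/
open MvPolynomial

variable (K : Type*) [Field K] (n p : ℕ)

/-- The image of `fⱼ ∈ K[x₁,…,xₙ]` in `K[x₁,…,xₙ,t₁,…,t_p]` under the natural
inclusion. -/
noncomputable def liftX (f : MvPolynomial (Fin n) K) :
    MvPolynomial (Fin n ⊕ Fin p) K :=
  rename Sum.inl f

/-- The operator `gᵢ = ∂_{xᵢ} + Σⱼ M_{∂fⱼ/∂xᵢ} ∘ ∂_{tⱼ}` on `K[x₁,…,xₙ,t₁,…,t_p]`. -/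
noncomputable def gOp (f : Fin p → MvPolynomial (Fin n) K) (i : Fin n) :
    Module.End K (MvPolynomial (Fin n ⊕ Fin p) K) :=
  (pderiv (Sum.inl i)).toLinearMap +
    ∑ j, LinearMap.mulLeft K (pderiv (Sum.inl i) (liftX K n p (f j))) *
      (pderiv (Sum.inr j)).toLinearMap

/-- The operator `sⱼ = −M_{tⱼ} ∘ ∂_{tⱼ} − id` on `K[x₁,…,xₙ,t₁,…,t_p]`
(Mellin substitution `sⱼ ↦ −tⱼ∂_{tⱼ} − 1`). -/
noncomputable def sOp (j : Fin p) :
    Module.End K (MvPolynomial (Fin n ⊕ Fin p) K) :=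
  -(LinearMap.mulLeft K (X (Sum.inr j)) * (pderiv (Sum.inr j)).toLinearMap) - 1

/-! `gᵢ` is a derivation of `K[x, t]`, being a polynomial combination of partial derivatives, and
a derivation `D` commutes with multiplication by any `h` with `D h = 0`. Here
`gᵢ (t_k - f_k) = -∂f_k/∂xᵢ + ∂f_k/∂xᵢ = 0`, because `f_k` does not involve the `t`-variables. -/

namespace Derivation

variable {R A : Type*} [CommSemiring R] [CommSemiring A] [Algebra R A]

theorem finset_sum_apply {M ι : Type*} [AddCommMonoid M] [Module A M] [Module R M]
    (s : Finset ι) (D : ι → Derivation R A M) (a : A) :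
    (∑ j ∈ s, D j) a = ∑ j ∈ s, D j a := by
  rw [← coeFnAddMonoidHom_apply, map_sum, Finset.sum_apply]
  rfl

theorem commute_mulLeft_of_apply_eq_zero (D : Derivation R A A) {a : A} (ha : D a = 0) :
    Commute (LinearMap.mulLeft R a) (D : Module.End R A) := by
  ext b
  simp [D.leibniz, ha]

end Derivation

section

variable {K : Type*} [Field K] {n p : ℕ}

theorem pderiv_inr_liftX (j : Fin p) (f : MvPolynomial (Fin n) K) :
    pderiv (Sum.inr j) (liftX K n p f) = 0 := by
  refine pderiv_eq_zero_of_notMem_vars fun hj => ?_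
  obtain ⟨_, -, h⟩ := Finset.mem_image.mp (vars_rename _ f hj)
  exact Sum.inl_ne_inr h

variable (f : Fin p → MvPolynomial (Fin n) K) (i : Fin n)

noncomputable def gDerivation :
    Derivation K (MvPolynomial (Fin n ⊕ Fin p) K) (MvPolynomial (Fin n ⊕ Fin p) K) :=
  pderiv (Sum.inl i) + ∑ j, pderiv (Sum.inl i) (liftX K n p (f j)) • pderiv (Sum.inr j)

theorem gDerivation_apply (q : MvPolynomial (Fin n ⊕ Fin p) K) :
    gDerivation f i q =
      pderiv (Sum.inl i) q + ∑ j, pderiv (Sum.inl i) (liftX K n p (f j)) * pderiv (Sum.inr j) q := by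
  simp [gDerivation, Derivation.finset_sum_apply]

theorem coe_gDerivation : (gDerivation f i : Module.End K _) = gOp K n p f i := by
  refine LinearMap.ext fun q => ?_
  simp [gDerivation_apply, gOp]

theorem gDerivation_X_inr_sub_liftX (k : Fin p) :
    gDerivation f i (X (Sum.inr k) - liftX K n p (f k)) = 0 := by
  simp [gDerivation_apply, pderiv_inr_liftX, pderiv_X, Pi.single_apply]

end

theorem stmt10_general (K : Type*) [Field K] (n p : ℕ)
    (f : Fin p → MvPolynomial (Fin n) K) (k : Fin p) (i : Fin n) :
    LinearMap.mulLeft K (X (Sum.inr k) - liftX K n p (f k)) * gOp K n p f i =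
      gOp K n p f i * LinearMap.mulLeft K (X (Sum.inr k) - liftX K n p (f k)) := by
  rw [← coe_gDerivation]
  exact (gDerivation f i).commute_mulLeft_of_apply_eq_zero (gDerivation_X_inr_sub_liftX f i k)

/-- the multiplication operator `t_k − f_k` commutes with `gᵢ`:
`[t_k − f_k, gᵢ] = 0`. -/
theorem stmt10 (K : Type*) [Field K] [CharZero K] (n p : ℕ)
    (f : Fin p → MvPolynomial (Fin n) K) (k : Fin p) (i : Fin n) :
    LinearMap.mulLeft K (X (Sum.inr k) - liftX K n p (f k)) * gOp K n p f i =
      gOp K n p f i * LinearMap.mulLeft K (X (Sum.inr k) - liftX K n p (f k)) :=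
  stmt10_general K n p f k i
end
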